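/- If a and b are twin primes in S with a < b (so b = a + 2 and both are odd primes), then for every x ∈ S with x < a, either a • x = b • x, or a • x and b • x are consecutive elements of S, i.e., b • x = N(a • x). -/
import Mathlib


/-- `S` is the set consisting of 1 and all odd prime numbers. -/
def S : Set ℕ := {n | n = 1 ∨ (Nat.Prime n ∧ Odd n)}

/-- `N x` is the smallest element of `S` strictly greater than `x`. -/
noncomputable def N (x : ℕ) : ℕ := sInf {s | s ∈ S ∧ x < s}

/-- `op a b = N (|a - b|)`, where `Nat.dist` is the absolute value of the
integer difference. -/
noncomputable def op (a b : ℕ) : ℕ := N (Nat.dist a b)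

lemma S_odd {n : ℕ} (h : n ∈ S) : Odd n := by
  rcases h with h | ⟨_, h⟩
  · simp [h]
  · exact h

lemma S_nonempty (x : ℕ) : {s | s ∈ S ∧ x < s}.Nonempty := by
  obtain ⟨p, hp, hpp⟩ := Nat.exists_infinite_primes (max (x + 1) 3)
  refine ⟨p, Or.inr ⟨hpp, ?_⟩, ?_⟩
  · exact hpp.odd_of_ne_two (by omega)
  · omega

lemma N_mem (x : ℕ) : N x ∈ S ∧ x < N x := Nat.sInf_mem (S_nonempty x)

theorem twin_primes_op (a b : ℕ) (ha : Nat.Prime a) (hao : Odd a)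
    (hb : Nat.Prime b) (hbo : Odd b) (hab : b = a + 2) :
    ∀ x ∈ S, x < a → op a x = op b x ∨ op b x = N (op a x) := by
  intro x hx hxa
  have hxo : Odd x := S_odd hx
  set d := a - x with hd
  have hda : Nat.dist a x = d := by
    rw [Nat.dist_eq_sub_of_le_right hxa.le]
  have hdb : Nat.dist b x = d + 2 := by
    rw [Nat.dist_eq_sub_of_le_right (by omega)]; omega
  have hdeven : Even d := Nat.Odd.sub_odd hao hxo
  have hd2 : d + 2 ∉ S := by
    intro h
    have := S_odd h
    rcases hdeven with ⟨k, hk⟩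
    have := Nat.odd_iff.mp this
    omega
  obtain ⟨hNdS, hNdgt⟩ := N_mem d
  have hNdne : N d ≠ d + 2 := fun h => hd2 (h ▸ hNdS)
  by_cases hcase : N d = d + 1
  · -- op b x = N (op a x)
    right
    rw [op, op, hda, hdb, hcase]
    have : {s | s ∈ S ∧ d + 2 < s} = {s | s ∈ S ∧ d + 1 < s} := by
      ext s
      simp only [Set.mem_setOf_eq]
      constructor
      · rintro ⟨hs, h⟩; exact ⟨hs, by omega⟩
      · rintro ⟨hs, h⟩
        refine ⟨hs, ?_⟩
        have : s ≠ d + 2 := fun he => hd2 (he ▸ hs)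
        omega
    rw [N, N, this]
  · left
    have hgt : d + 2 < N d := by omega
    rw [op, op, hda, hdb]
    have : {s | s ∈ S ∧ d < s} = {s | s ∈ S ∧ d + 2 < s} := by
      ext s
      simp only [Set.mem_setOf_eq]
      constructor
      · rintro ⟨hs, h⟩
        refine ⟨hs, ?_⟩
        have : N d ≤ s := Nat.sInf_le ⟨hs, h⟩
        omega
      · rintro ⟨hs, h⟩; exact ⟨hs, by omega⟩
    rw [N, N, this]
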